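/- (Recursive feasibility of the multi-horizon MPC for tracking.) Let A, B, K be real matrices of sizes n×n, n×m, m×n, X ⊆ ℝ^n, U ⊆ ℝ^m, and fix a horizon division H = [h₁, h₂, …, h_H] with h₁ ≥ 1 and total length N = ∑ h_i. Define the coarse dynamics A_i = A^i, B_i = ∑_{j<i} A^j B, the tail-feasible set X₀⁽²⁾ = { x ∈ X : there exist inputs in U driving the coarse tail dynamics (sub-intervals i = 2,…,H) with all states in X }, W_MH = { (x, x̄, ū) : x ∈ X₀⁽²⁾, K(x̄ − x) + ū ∈ U }, A_e = [[A−BK, BK, B], [0, I_n, 0], [0, 0, I_m]], and O_∞^MH = { w : A_e^k w ∈ W_MH for all k ≥ 0 }. Call a state x feasible if there exist sequences x_(0),…,x_(N) and u_(0),…,u_(N−1) and a pair (x̄, ū) such that: x_(k+1) = A_i x_(k) + B_i u_(k) on each sub-interval i; x_(k) ∈ X and u_(k) ∈ U for all 0 ≤ k ≤ N−1; x_(0) = x; (x_(h₁), x̄, ū) ∈ O_∞^MH; and (A − I_n) x̄ + B ū = 0. Then feasibility is recursively preserved: if x is feasible with a feasible point whose first input is u_(0), the successor state A x + B u_(0)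 is again feasible; hence if the problem is feasible at time t₀ it remains feasible at all times t ≥ t₀ along the closed loop. -/

import Mathlib

open Matrix

/-- Coarse multi-horizon input matrix `B_i = ∑_{j=0}^{i-1} A^j B`. -/
noncomputable def Bcoarse {n m : ℕ} (A : Matrix (Fin n) (Fin n) ℝ)
    (B : Matrix (Fin n) (Fin m) ℝ) (i : ℕ) : Matrix (Fin n) (Fin m) ℝ :=
  ∑ j ∈ Finset.range i, A ^ j * B

/-- Feasibility of the coarse tail problem along a list of granularities `steps`: from the state
`x` there exist inputs in `U` such that all successor states generated by the coarse dynamics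
`x ↦ A^i x + B_i u` lie in `X`. -/
def tailFeasible {n m : ℕ} (A : Matrix (Fin n) (Fin n) ℝ) (B : Matrix (Fin n) (Fin m) ℝ)
    (X : Set (Fin n → ℝ)) (U : Set (Fin m → ℝ)) : List ℕ → (Fin n → ℝ) → Prop
  | [], _ => True
  | i :: rest, x => ∃ u ∈ U,
      (A ^ i).mulVec x + (Bcoarse A B i).mulVec u ∈ X ∧
      tailFeasible A B X U rest ((A ^ i).mulVec x + (Bcoarse A B i).mulVec u)

/-- The flattened list of granularities of the tail sub-intervals: given the horizon tail
`hs = [h₂, …, h_H]`, the `j`-th entry of `hs` (granularity `j + 2`) contributes `h_{j+2}` steps. -/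
def tailSteps (hs : List ℕ) : List ℕ :=
  hs.zipIdx.flatMap fun p => List.replicate p.1 (p.2 + 2)

/-- The set `X₀⁽²⁾` of states in `X` from which the coarse tail problem (sub-intervals
`i = 2, …, H`) admits a feasible input sequence. -/
def X02 {n m : ℕ} (A : Matrix (Fin n) (Fin n) ℝ) (B : Matrix (Fin n) (Fin m) ℝ)
    (X : Set (Fin n → ℝ)) (U : Set (Fin m → ℝ)) (hs : List ℕ) : Set (Fin n → ℝ) :=
  {x | x ∈ X ∧ tailFeasible A B X U (tailSteps hs) x}

/-- The extended block matrix `A_e = [[A - BK, BK, B], [0, I_n, 0], [0, 0, I_m]]`. -/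
noncomputable def Ae {n m : ℕ} (A : Matrix (Fin n) (Fin n) ℝ) (B : Matrix (Fin n) (Fin m) ℝ)
    (K : Matrix (Fin m) (Fin n) ℝ) :
    Matrix ((Fin n ⊕ Fin n) ⊕ Fin m) ((Fin n ⊕ Fin n) ⊕ Fin m) ℝ :=
  Matrix.fromBlocks
    (Matrix.fromBlocks (A - B * K) (B * K) 0 1)
    (Matrix.fromRows B 0)
    0 1

/-- The extended state vector `w = (x, x̄, ū) ∈ ℝ^{2n+m}`. -/
def toVec {n m : ℕ} (x xb : Fin n → ℝ) (ub : Fin m → ℝ) : ((Fin n ⊕ Fin n) ⊕ Fin m) → ℝ :=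
  Sum.elim (Sum.elim x xb) ub

/-- Projection onto the state component `x` of the extended state. -/
def projX {n m : ℕ} (w : ((Fin n ⊕ Fin n) ⊕ Fin m) → ℝ) : Fin n → ℝ :=
  fun i => w (Sum.inl (Sum.inl i))

/-- Projection onto the steady-state component `x̄` of the extended state. -/
def projXbar {n m : ℕ} (w : ((Fin n ⊕ Fin n) ⊕ Fin m) → ℝ) : Fin n → ℝ :=
  fun i => w (Sum.inl (Sum.inr i))

/-- Projection onto the steady-input component `ū` of the extended state. -/
def projUbar {n m : ℕ} (w : ((Fin n ⊕ Fin n) ⊕ Fin m) → ℝ) : Fin m → ℝ :=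
  fun i => w (Sum.inr i)

/-- The multi-horizon constraint set
`W_MH = { (x, x̄, ū) : x ∈ X₀⁽²⁾, K (x̄ - x) + ū ∈ U }`. -/
def WMH {n m : ℕ} (A : Matrix (Fin n) (Fin n) ℝ) (B : Matrix (Fin n) (Fin m) ℝ)
    (K : Matrix (Fin m) (Fin n) ℝ) (X : Set (Fin n → ℝ)) (U : Set (Fin m → ℝ))
    (hs : List ℕ) : Set (((Fin n ⊕ Fin n) ⊕ Fin m) → ℝ) :=
  {w | projX w ∈ X02 A B X U hs ∧ K.mulVec (projXbar w - projX w) + projUbar w ∈ U}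

/-- The multi-horizon maximal output admissible set
`O_∞^MH = { w : A_e^k w ∈ W_MH for all k ≥ 0 }`. -/
def OinfMH {n m : ℕ} (A : Matrix (Fin n) (Fin n) ℝ) (B : Matrix (Fin n) (Fin m) ℝ)
    (K : Matrix (Fin m) (Fin n) ℝ) (X : Set (Fin n → ℝ)) (U : Set (Fin m → ℝ))
    (hs : List ℕ) : Set (((Fin n ⊕ Fin n) ⊕ Fin m) → ℝ) :=
  {w | ∀ k : ℕ, ((Ae A B K) ^ k).mulVec w ∈ WMH A B K X U hs}

/-- The flattened list of granularities of the whole horizon division `H = [h₁, h₂, …, h_H]`: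
`h₁` steps of granularity `1` followed by the coarse tail steps. Its length is the total
horizon length `N = ∑ h_i`. -/
def fullSteps (h1 : ℕ) (hs : List ℕ) : List ℕ :=
  List.replicate h1 1 ++ tailSteps hs

/-- `FeasibleWit A B K X U h1 hs x xs us xb ub` states that the sequences `xs`, `us` and the
steady pair `(xb, ub)` witness feasibility of the multi-horizon tracking MPC problem at state `x`:
the piecewise coarse dynamics `x_(k+1) = A_i x_(k) + B_i u_(k)` hold on each sub-interval,
`x_(k) ∈ X` and `u_(k) ∈ U` for `0 ≤ k ≤ N - 1`, `x_(0) = x`, the invariance constraint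
`(x_(h₁), x̄, ū) ∈ O_∞^MH` holds, and `(A - I) x̄ + B ū = 0`. -/
def FeasibleWit {n m : ℕ} (A : Matrix (Fin n) (Fin n) ℝ) (B : Matrix (Fin n) (Fin m) ℝ)
    (K : Matrix (Fin m) (Fin n) ℝ) (X : Set (Fin n → ℝ)) (U : Set (Fin m → ℝ))
    (h1 : ℕ) (hs : List ℕ) (x : Fin n → ℝ)
    (xs : ℕ → Fin n → ℝ) (us : ℕ → Fin m → ℝ) (xb : Fin n → ℝ) (ub : Fin m → ℝ) : Prop :=
  xs 0 = x ∧
  (∀ k < (fullSteps h1 hs).length,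
    xs (k + 1) = (A ^ ((fullSteps h1 hs).getD k 1)).mulVec (xs k) +
      (Bcoarse A B ((fullSteps h1 hs).getD k 1)).mulVec (us k)) ∧
  (∀ k < (fullSteps h1 hs).length, xs k ∈ X ∧ us k ∈ U) ∧
  toVec (xs h1) xb ub ∈ OinfMH A B K X U hs ∧
  (A - 1).mulVec xb + B.mulVec ub = 0

/-- Feasibility of the multi-horizon tracking MPC problem at the state `x`: nonemptiness of the
constraint set. -/
def Feasible {n m : ℕ} (A : Matrix (Fin n) (Fin n) ℝ) (B : Matrix (Fin n) (Fin m) ℝ)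
    (K : Matrix (Fin m) (Fin n) ℝ) (X : Set (Fin n → ℝ)) (U : Set (Fin m → ℝ))
    (h1 : ℕ) (hs : List ℕ) (x : Fin n → ℝ) : Prop :=
  ∃ xs us xb ub, FeasibleWit A B K X U h1 hs x xs us xb ub

/-!
The first input of a feasible point is applied, and the remaining inputs are shifted by one
step. The fine part of the horizon then lacks its last step: it is filled in with the terminal
control law `u = K (x̄ - x) + ū` applied at `x_(h₁)`, which is admissible because
`(x_(h₁), x̄, ū) ∈ O_∞^MH ⊆ W_MH`. The resulting state is the first component of
`A_e (x_(h₁), x̄, ū)`, which again lies in `O_∞^MH` since that set is `A_e`-invariant; in particular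
the state lies in `X₀⁽²⁾`, so the coarse tail can be completed from it.
-/

section Sequences

variable {α : Type*}

def seqAppend (n : ℕ) (f g : ℕ → α) (k : ℕ) : α :=
  if k < n then f k else g (k - n)

theorem seqAppend_of_lt {n k : ℕ} {f g : ℕ → α} (hk : k < n) : seqAppend n f g k = f k :=
  if_pos hk

theorem seqAppend_add (n j : ℕ) (f g : ℕ → α) : seqAppend n f g (n + j) = g j := by
  simp [seqAppend]

theorem seqAppend_of_le {n k : ℕ} {f g : ℕ → α} (hfg : g 0 = f n) (hk : k ≤ n) :
    seqAppend n f g k = f k := by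
  rcases hk.lt_or_eq with hk | rfl
  · exact seqAppend_of_lt hk
  · simpa using seqAppend_add k 0 f g ▸ hfg

end Sequences

section Trajectories

variable {n m : ℕ} (A : Matrix (Fin n) (Fin n) ℝ) (B : Matrix (Fin n) (Fin m) ℝ)
  (X : Set (Fin n → ℝ)) (U : Set (Fin m → ℝ))

def IsCoarseTrajectory (steps : List ℕ) (xs : ℕ → Fin n → ℝ) (us : ℕ → Fin m → ℝ) : Prop :=
  ∀ k < steps.length,
    xs (k + 1) = (A ^ steps.getD k 1) *ᵥ xs k + Bcoarse A B (steps.getD k 1) *ᵥ us k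

def Admissible (N : ℕ) (xs : ℕ → Fin n → ℝ) (us : ℕ → Fin m → ℝ) : Prop :=
  ∀ k < N, xs k ∈ X ∧ us k ∈ U

variable {A B X U}

theorem isCoarseTrajectory_cons {i : ℕ} {steps : List ℕ} {xs : ℕ → Fin n → ℝ}
    {us : ℕ → Fin m → ℝ} :
    IsCoarseTrajectory A B (i :: steps) xs us ↔
      xs 1 = (A ^ i) *ᵥ xs 0 + Bcoarse A B i *ᵥ us 0 ∧
        IsCoarseTrajectory A B steps (fun k => xs (k + 1)) (fun k => us (k + 1)) := by
  constructor
  · intro h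
    exact ⟨h 0 (by simp), fun k hk => h (k + 1) (by simpa using hk)⟩
  · rintro ⟨h₀, h⟩ (_ | k) hk
    · exact h₀
    · exact h k (by simpa using hk)

theorem IsCoarseTrajectory.of_append {l₁ l₂ : List ℕ} {xs : ℕ → Fin n → ℝ}
    {us : ℕ → Fin m → ℝ} (h : IsCoarseTrajectory A B (l₁ ++ l₂) xs us) :
    IsCoarseTrajectory A B l₁ xs us := fun k hk => by
  rw [← List.getD_append l₁ l₂ _ _ hk]
  exact h k (by rw [List.length_append]; omega)

theorem IsCoarseTrajectory.append {l₁ l₂ : List ℕ} {xs ys : ℕ → Fin n → ℝ}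
    {us vs : ℕ → Fin m → ℝ} (h₁ : IsCoarseTrajectory A B l₁ xs us)
    (h₂ : IsCoarseTrajectory A B l₂ ys vs) (hjoin : ys 0 = xs l₁.length) :
    IsCoarseTrajectory A B (l₁ ++ l₂) (seqAppend l₁.length xs ys)
      (seqAppend l₁.length us vs) := by
  intro k hk
  rcases lt_or_ge k l₁.length with hk₁ | hk₁
  · rw [List.getD_append _ _ _ _ hk₁, seqAppend_of_lt hk₁, seqAppend_of_lt hk₁,
      seqAppend_of_le hjoin hk₁]
    exact h₁ k hk₁
  · obtain ⟨j, rfl⟩ := Nat.exists_eq_add_of_le hk₁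
    rw [List.getD_append_right _ _ _ _ hk₁, Nat.add_sub_cancel_left, add_assoc,
      seqAppend_add, seqAppend_add, seqAppend_add]
    exact h₂ j (by rw [List.length_append] at hk; omega)

theorem Admissible.append {N₁ N₂ : ℕ} {xs ys : ℕ → Fin n → ℝ} {us vs : ℕ → Fin m → ℝ}
    (h₁ : Admissible X U N₁ xs us) (h₂ : Admissible X U N₂ ys vs) :
    Admissible X U (N₁ + N₂) (seqAppend N₁ xs ys) (seqAppend N₁ us vs) := by
  intro k hk
  rcases lt_or_ge k N₁ with hk₁ | hk₁
  · rw [seqAppend_of_lt hk₁, seqAppend_of_lt hk₁]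
    exact h₁ k hk₁
  · obtain ⟨j, rfl⟩ := Nat.exists_eq_add_of_le hk₁
    rw [seqAppend_add, seqAppend_add]
    exact h₂ j (by omega)

theorem exists_trajectory_of_tailFeasible :
    ∀ {steps : List ℕ} {x : Fin n → ℝ}, x ∈ X → tailFeasible A B X U steps x →
      ∃ ys vs, ys 0 = x ∧ IsCoarseTrajectory A B steps ys vs ∧
        Admissible X U steps.length ys vs
  | [], x, _, _ => ⟨fun _ => x, fun _ => 0, rfl, nofun, nofun⟩
  | i :: steps, x, hx, ⟨u, hu, hx', htail⟩ => by
    obtain ⟨ys, vs, hy₀, hys, hadm⟩ := exists_trajectory_of_tailFeasible hx' htail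
    refine ⟨fun | 0 => x | k + 1 => ys k, fun | 0 => u | k + 1 => vs k, rfl,
      isCoarseTrajectory_cons.2 ⟨hy₀, hys⟩, ?_⟩
    rintro (_ | k) hk
    · exact ⟨hx, hu⟩
    · exact hadm k (by simpa using hk)

end Trajectories

theorem fullSteps_succ (p : ℕ) (hs : List ℕ) : fullSteps (p + 1) hs = 1 :: fullSteps p hs := rfl

theorem fullSteps_succ_eq_append (p : ℕ) (hs : List ℕ) :
    fullSteps (p + 1) hs = List.replicate p 1 ++ 1 :: tailSteps hs := by
  simp [fullSteps, List.replicate_succ']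

section MultiHorizon

variable {n m : ℕ} {A : Matrix (Fin n) (Fin n) ℝ} {B : Matrix (Fin n) (Fin m) ℝ}
  {K : Matrix (Fin m) (Fin n) ℝ} {X : Set (Fin n → ℝ)} {U : Set (Fin m → ℝ)} {hs : List ℕ}
  {xb : Fin n → ℝ} {ub : Fin m → ℝ}

@[simp]
theorem Bcoarse_one : Bcoarse A B 1 = B := by
  simp [Bcoarse]

theorem Ae_mulVec_toVec (x : Fin n → ℝ) :
    Ae A B K *ᵥ toVec x xb ub = toVec (A *ᵥ x + B *ᵥ (K *ᵥ (xb - x) + ub)) xb ub := by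
  ext ((i | i) | i) <;>
    simp [Ae, toVec, Matrix.fromBlocks_mulVec, Matrix.fromRows_mulVec, Matrix.sub_mulVec,
      Matrix.mulVec_add, Matrix.mulVec_sub, Matrix.mulVec_mulVec]
  ring

theorem OinfMH_subset_WMH : OinfMH A B K X U hs ⊆ WMH A B K X U hs := fun w hw => by
  simpa using hw 0

theorem Ae_mulVec_mem_OinfMH {w : (Fin n ⊕ Fin n) ⊕ Fin m → ℝ} (hw : w ∈ OinfMH A B K X U hs) :
    Ae A B K *ᵥ w ∈ OinfMH A B K X U hs := fun k => by
  simpa [Matrix.mulVec_mulVec, ← pow_succ] using hw (k + 1)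

theorem feasibleWit_seqAppend {p : ℕ} {xf ys : ℕ → Fin n → ℝ} {uf vs : ℕ → Fin m → ℝ}
    (hf : IsCoarseTrajectory A B (List.replicate p 1) xf uf) (hfa : Admissible X U p xf uf)
    (hc : IsCoarseTrajectory A B (1 :: tailSteps hs) ys vs)
    (hca : Admissible X U ((tailSteps hs).length + 1) ys vs) (hjoin : ys 0 = xf p)
    (hO : toVec (ys 1) xb ub ∈ OinfMH A B K X U hs) (hss : (A - 1) *ᵥ xb + B *ᵥ ub = 0) :
    FeasibleWit A B K X U (p + 1) hs (xf 0) (seqAppend p xf ys) (seqAppend p uf vs) xb ub := by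
  have htraj := hf.append hc (by simpa using hjoin)
  have hadm : Admissible X U (List.replicate p 1 ++ 1 :: tailSteps hs).length
      (seqAppend p xf ys) (seqAppend p uf vs) := by
    simpa using hfa.append hca
  rw [List.length_replicate] at htraj
  rw [FeasibleWit, fullSteps_succ_eq_append]
  exact ⟨seqAppend_of_le hjoin p.zero_le, htraj, hadm, by rwa [seqAppend_add p 1], hss⟩

theorem FeasibleWit.feasible_shift {h1 : ℕ} {x : Fin n → ℝ} {xs : ℕ → Fin n → ℝ}
    {us : ℕ → Fin m → ℝ} (hh1 : 1 ≤ h1) (hw : FeasibleWit A B K X U h1 hs x xs us xb ub) :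
    Feasible A B K X U h1 hs (A *ᵥ x + B *ᵥ us 0) := by
  obtain ⟨p, rfl⟩ := Nat.exists_eq_add_of_le' hh1
  obtain ⟨rfl, hdyn, hadm, hO, hss⟩ := hw
  rw [fullSteps_succ] at hdyn hadm
  obtain ⟨hxs₁, hdyn⟩ := isCoarseTrajectory_cons.1 hdyn
  have hfine : IsCoarseTrajectory A B (List.replicate p 1)
      (fun k => xs (k + 1)) (fun k => us (k + 1)) :=
    (show IsCoarseTrajectory A B (List.replicate p 1 ++ _) _ _ from hdyn).of_append
  have hfineAdm : Admissible X U p (fun k => xs (k + 1)) (fun k => us (k + 1)) :=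
    fun k hk => hadm (k + 1) (by
      simp only [fullSteps, List.length_cons, List.length_append, List.length_replicate]; omega)
  set u' := K *ᵥ (xb - xs (p + 1)) + ub
  set x' := A *ᵥ xs (p + 1) + B *ᵥ u'
  have hW : toVec (xs (p + 1)) xb ub ∈ WMH A B K X U hs := OinfMH_subset_WMH hO
  have hO' : toVec x' xb ub ∈ OinfMH A B K X U hs := by
    simpa only [Ae_mulVec_toVec] using Ae_mulVec_mem_OinfMH hO
  obtain ⟨hx'X, hx'tail⟩ : x' ∈ X02 A B X U hs := (OinfMH_subset_WMH hO').1
  obtain ⟨ys, vs, hy₀, hys, hyadm⟩ := exists_trajectory_of_tailFeasible hx'X hx'tail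
  have hcoarse : IsCoarseTrajectory A B (1 :: tailSteps hs)
      (fun | 0 => xs (p + 1) | k + 1 => ys k) (fun | 0 => u' | k + 1 => vs k) :=
    isCoarseTrajectory_cons.2 ⟨by simpa using hy₀, hys⟩
  have hcoarseAdm : Admissible X U ((tailSteps hs).length + 1)
      (fun | 0 => xs (p + 1) | k + 1 => ys k) (fun | 0 => u' | k + 1 => vs k)
    | 0, _ => ⟨hW.1.1, hW.2⟩
    | k + 1, hk => hyadm k (by omega)
  simp only [pow_one, Bcoarse_one] at hxs₁
  rw [← hxs₁]
  exact ⟨_, _, xb, ub, feasibleWit_seqAppend hfine hfineAdm hcoarse hcoarseAdm rfl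
    (by rwa [← hy₀] at hO') hss⟩

end MultiHorizon

/-- recursive feasibility of the multi-horizon MPC for tracking. If `x` is
feasible with a feasible point whose first input is `u_(0) = us 0`, then the successor state
`A x + B u_(0)` is again feasible; hence, along any closed loop in which the applied input is
always the first input of a feasible point, feasibility at time `t₀ = 0` implies feasibility at
all later times. -/
theorem recursive_feasibility
    {n m : ℕ} (A : Matrix (Fin n) (Fin n) ℝ) (B : Matrix (Fin n) (Fin m) ℝ)
    (K : Matrix (Fin m) (Fin n) ℝ) (X : Set (Fin n → ℝ)) (U : Set (Fin m → ℝ))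
    (h1 : ℕ) (hs : List ℕ) (hh1 : 1 ≤ h1) :
    (∀ (x : Fin n → ℝ) (xs : ℕ → Fin n → ℝ) (us : ℕ → Fin m → ℝ)
        (xb : Fin n → ℝ) (ub : Fin m → ℝ),
      FeasibleWit A B K X U h1 hs x xs us xb ub →
      Feasible A B K X U h1 hs (A.mulVec x + B.mulVec (us 0))) ∧
    (∀ (xt : ℕ → Fin n → ℝ) (ut : ℕ → Fin m → ℝ),
      (∀ t, xt (t + 1) = A.mulVec (xt t) + B.mulVec (ut t)) →
      (∀ t, Feasible A B K X U h1 hs (xt t) →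
        ∃ xs us xb ub, FeasibleWit A B K X U h1 hs (xt t) xs us xb ub ∧ ut t = us 0) →
      Feasible A B K X U h1 hs (xt 0) →
      ∀ t, Feasible A B K X U h1 hs (xt t)) := by
  refine ⟨fun x xs us xb ub hw => hw.feasible_shift hh1, fun xt ut hclosed hpolicy h0 t => ?_⟩
  induction t with
  | zero => exact h0
  | succ t ih =>
    obtain ⟨xs, us, xb, ub, hw, hut⟩ := hpolicy t ih
    rw [hclosed t, hut]
    exact hw.feasible_shift hh1
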